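/- Let w be an infinite non-ultimately periodic word, u ∈ Π_γ(w), h ≥ γ, φ ∈ Φ_h. If m1 ≤ m2 are positions of w not covered by any u-run, the number of u-runs contained in [m1,m2] is at most g, and m̄1, m̄2 are the images of m1, m2 under the position bijection rpo_{w,u,φ} to the reduced word, then PL(reduce_{w,u,φ}[m̄1, m̄2]) ≤ (g+1) · maxPL(w[m1, m2]). -/

import Mathlib

open scoped BigOperators

variable {α : Type*}

/-- The factor of the infinite word `w` (1-indexed) from position `i` to position `j`. -/
def Subword (w : ℕ → α) (i j : ℕ) : List α :=
  (List.range (j + 1 - i)).map fun n => w (i + n)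

/-- `t` is a finite factor of the infinite word `w` (positions are 1-indexed). -/
def IsFactorI (w : ℕ → α) (t : List α) : Prop :=
  ∃ i, 1 ≤ i ∧ t = (List.range t.length).map fun n => w (i + n)

/-- `t` occurs infinitely often in the infinite word `w`. -/
def RecurrentI (w : ℕ → α) (t : List α) : Prop :=
  ∀ N, ∃ i, N ≤ i ∧ t = (List.range t.length).map fun n => w (i + n)

/-- The infinite word `w` is ultimately periodic. -/
def UltimatelyPeriodic (w : ℕ → α) : Prop :=
  ∃ p N, 1 ≤ p ∧ ∀ n, N ≤ n → w (n + p) = w n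

/-- The `q`-power `u^q` of a finite word `u`, for a rational exponent `q ≥ 1`:
`u^⌊q⌋` followed by the prefix of `u` of length `(q - ⌊q⌋)·|u|`. -/
def fracPow (u : List α) (q : ℚ) : List α :=
  (List.replicate ⌊q⌋.toNat u).flatten ++
    u.take (⌊q * (u.length : ℚ)⌋.toNat - ⌊q⌋.toNat * u.length)

/-- A nonempty word is primitive if it is not a (possibly fractional) `q`-power,
`q ≥ 2`, of any word. -/
def Primitive (v : List α) : Prop :=
  v ≠ [] ∧ ∀ (t : List α) (q : ℚ), 2 ≤ q → v ≠ fracPow t q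

/-- `PowFactor u`: finite factors of `u^∞` together with finite factors of `(u^R)^∞`. -/
def IsPowFactor (u t : List α) : Prop :=
  (∃ k, t <:+: (List.replicate k u).flatten) ∨ (∃ k, t <:+: (List.replicate k u.reverse).flatten)

/-- `(i,j)` is a `u`-run of the infinite word `w` (with the fixed parameter `γ`). -/
def IsRun (γ : ℕ) (w : ℕ → α) (u : List α) (i j : ℕ) : Prop :=
  i < j ∧ (γ - 2) * u.length ≤ j - i + 1 ∧ u.length + 1 < i ∧
  IsPowFactor u (Subword w (i - u.length) (j + u.length)) ∧
  ¬ IsPowFactor u (Subword w (i - u.length - 1) (j + u.length)) ∧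
  ¬ IsPowFactor u (Subword w (i - u.length) (j + u.length + 1))

/-- Membership in the set `Π_γ(w)`. -/
def InPi (γ : ℕ) (w : ℕ → α) (u : List α) : Prop :=
  Primitive u ∧ IsFactorI w u ∧
  ¬ IsPowFactor u ((List.range (γ * u.length)).map fun n => w (1 + n)) ∧
  ∃ v : List α, v.length = u.length ∧ IsPowFactor u v ∧
    RecurrentI w ((List.replicate γ v).flatten)

/-- Palindromic length: the minimal number of nonempty palindromes whose
concatenation equals `v`. -/
noncomputable def PL (v : List α) : ℕ :=
  sInf {k | ∃ ps : List (List α), ps.flatten = v ∧ ps.length = k ∧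
    ∀ p ∈ ps, p ≠ [] ∧ p.reverse = p}

/-- `maxPL v`: the maximum of `PL` over the factors of `v`. -/
noncomputable def maxPL (v : List α) : ℕ :=
  sSup {n | ∃ t, t <:+: v ∧ n = PL t}

/-- `(I, J, W, Z, D)` is the run factorization `factrz(w,u)` of `w`:
`(I k, J k)` enumerates the `u`-runs in increasing order, `W k` is the inter-run
factor, and `w[I k, J k] = (Z k)^(D k)`. -/
structure IsFactrz (γ : ℕ) (w : ℕ → α) (u : List α)
    (I J : ℕ → ℕ) (W Z : ℕ → List α) (D : ℕ → ℚ) : Prop where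
  run : ∀ k, 1 ≤ k → IsRun γ w u (I k) (J k)
  mono : ∀ k, 1 ≤ k → I k < I (k + 1)
  complete : ∀ i j, IsRun γ w u i j → ∃ k, 1 ≤ k ∧ I k = i ∧ J k = j
  j0 : J 0 = 0
  wdef : ∀ k, 1 ≤ k → W k = Subword w (J (k - 1) + 1) (I k - 1)
  zlen : ∀ k, 1 ≤ k → (Z k).length = u.length
  zpow : ∀ k, 1 ≤ k → IsPowFactor u (Z k)
  dge : ∀ k, 1 ≤ k → 1 ≤ D k
  zd : ∀ k, 1 ≤ k → Subword w (I k) (J k) = fracPow (Z k) (D k)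

/-- Membership in `Φ_h` (with fixed parameter `γ`). -/
def InPhi (γ h : ℕ) (φ : ℚ → ℚ) : Prop :=
  ∀ q : ℚ, 1 ≤ q → ((γ : ℚ) - 2 ≤ φ q ∧ φ q < (h : ℚ) ∧ ∃ n : ℕ, q - φ q = (n : ℚ))

/-- The finite prefix `W 1 (Z 1)^(E 1) ⋯ W k (Z k)^(E k)` of the reduced word. -/
def redPrefix (W Z : ℕ → List α) (E : ℕ → ℚ) : ℕ → List α
  | 0 => []
  | k + 1 => redPrefix W Z E k ++ W (k + 1) ++ fracPow (Z (k + 1)) (E (k + 1))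

/-- `x` is the reduced word `W 1 (Z 1)^(E 1) W 2 (Z 2)^(E 2) ⋯` (1-indexed). -/
def IsReduce (W Z : ℕ → List α) (E : ℕ → ℚ) (x : ℕ → α) : Prop :=
  ∀ k, redPrefix W Z E k = (List.range (redPrefix W Z E k).length).map fun n => x (1 + n)

/-- Position `i` of `w` is not covered by any `u`-run. -/
def RpoDom (γ : ℕ) (w : ℕ → α) (u : List α) (i : ℕ) : Prop :=
  1 ≤ i ∧ ∀ a b, IsRun γ w u a b → ¬ (a ≤ i ∧ i ≤ b)

/-- `κ(j) = Σ_{i ≤ j} (|W i| + |(Z i)^(D i)|)`, the end position of the `j`-th run. -/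
def kappa (W Z : ℕ → List α) (D : ℕ → ℚ) (j : ℕ) : ℕ :=
  ∑ i ∈ Finset.Icc 1 j, ((W i).length + (fracPow (Z i) (D i)).length)

/-- The graph of the position bijection `rpo`: position `i` of `w` (with exponent
sequence `D`) corresponds to position `ib` of the reduced word (exponents `E`). -/
def RpoRel (W Z : ℕ → List α) (D E : ℕ → ℚ) (i ib : ℕ) : Prop :=
  ∃ j, kappa W Z D j < i ∧ i ≤ kappa W Z D (j + 1) ∧
    ib = kappa W Z E j + (i - kappa W Z D j)

/-- There are at most `N` `u`-runs entirely contained in `[a,b]`. -/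
def RunCountLe (γ : ℕ) (w : ℕ → α) (u : List α) (a b N : ℕ) : Prop :=
  ∀ S : Finset (ℕ × ℕ), (∀ p ∈ S, IsRun γ w u p.1 p.2 ∧ a ≤ p.1 ∧ p.2 ≤ b) → S.card ≤ N

/-- `(i,j)` is a standard palindrome of `w` with respect to `u`. -/
def IsStdPal (γ : ℕ) (w : ℕ → α) (u : List α) (i j : ℕ) : Prop :=
  i ≤ j ∧ RpoDom γ w u i ∧ RpoDom γ w u j ∧
  (Subword w (i - 1) (j + 1)).reverse = Subword w (i - 1) (j + 1) ∧
  (∀ m, i - 1 ≤ m → m ≤ min (i + u.length - 1) j → RpoDom γ w u m) ∧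
  (∀ m, max (j + 1 - u.length) i ≤ m → m ≤ j + 1 → RpoDom γ w u m) ∧
  (∀ m, i ≤ m → m ≤ j → (RpoDom γ w u m ↔ RpoDom γ w u (i + j - m)))

/-- `(m1,m2)` is a centered standard palindrome of `w[i,j]`. -/
def IsCnStdPal (γ : ℕ) (w : ℕ → α) (u : List α) (i j m1 m2 : ℕ) : Prop :=
  IsStdPal γ w u m1 m2 ∧ i ≤ m1 ∧ m2 ≤ j ∧ m1 - i = j - m2

/-!
Since `q - φ(q)` is a natural number, each reduced block `W k (Z k)^φ(D k)` is a prefix of the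
original block `W k (Z k)^(D k)`, which (the `u`-runs being pairwise disjoint) is the factor of `w`
between the ends of the `(k-1)`-th and `k`-th runs. So on each block the reduced word agrees with
`w` up to a shift. Cutting `reduce[m̄1, m̄2]` at the ends of the blocks it meets splits it into one
piece per run inside `[m1, m2]`, plus one; every piece is a factor of `w[m1, m2]`, and `PL` is
subadditive.
-/

open List

section Subword

@[simp] lemma length_subword (w : ℕ → α) (a b : ℕ) : (Subword w a b).length = b + 1 - a := by
  simp [Subword]

lemma getElem?_subword (w : ℕ → α) {a b n : ℕ} (h : n < b + 1 - a) :
    (Subword w a b)[n]? = some (w (a + n)) := by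
  simp [Subword, h]

lemma getElem_subword (w : ℕ → α) {a b n : ℕ} (h : n < (Subword w a b).length) :
    (Subword w a b)[n] = w (a + n) := by
  simp [Subword]

lemma subword_append (w : ℕ → α) {a b c : ℕ} (hab : a ≤ b + 1) (hbc : b ≤ c) :
    Subword w a c = Subword w a b ++ Subword w (b + 1) c := by
  rw [Subword, show c + 1 - a = (b + 1 - a) + (c + 1 - (b + 1)) by omega, range_add, map_append,
    map_map]
  congr 2
  funext n
  simp only [Function.comp_apply]
  congr 1
  omega

lemma subword_self (w : ℕ → α) (a : ℕ) : Subword w a a = [w a] := by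
  simp [Subword]

lemma subword_infix_subword (w : ℕ → α) {a b a' b' : ℕ} (ha : a' ≤ a) (hb : b ≤ b') :
    Subword w a b <:+: Subword w a' b' := by
  rcases lt_or_ge b a with hba | hab
  · simp [Subword, show b + 1 - a = 0 by omega]
  · refine infix_iff_getElem?.2 ⟨a - a', by simp; omega, fun i hi => ?_⟩
    rw [getElem?_subword w (by simp at hi; omega), getElem_subword]
    congr 2
    omega

lemma subword_add_congr {x y : ℕ → α} {s t a b : ℕ}
    (h : ∀ n, a ≤ n → n ≤ b → x (s + n) = y (t + n)) :
    Subword x (s + a) (s + b) = Subword y (t + a) (t + b) := by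
  rw [Subword, Subword, show s + b + 1 - (s + a) = t + b + 1 - (t + a) by omega]
  refine map_congr_left fun n hn => ?_
  rw [mem_range] at hn
  rw [add_assoc, add_assoc, h _ (by omega) (by omega)]

end Subword

section PalindromicLength

lemma PL_le {v : List α} (ps : List (List α)) (hv : ps.flatten = v)
    (hps : ∀ p ∈ ps, p ≠ [] ∧ p.reverse = p) : PL v ≤ ps.length :=
  Nat.sInf_le ⟨ps, hv, rfl, hps⟩

lemma flatten_map_singleton (v : List α) : (v.map ([·])).flatten = v := by
  induction v <;> simp_all

lemma PL_le_length (v : List α) : PL v ≤ v.length := by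
  simpa using PL_le (v.map ([·])) (flatten_map_singleton v) (by simp)

lemma exists_palindromic_factorization (v : List α) :
    ∃ ps : List (List α), ps.flatten = v ∧ ps.length = PL v ∧ ∀ p ∈ ps, p ≠ [] ∧ p.reverse = p :=
  Nat.sInf_mem (s := {k | ∃ ps : List (List α), ps.flatten = v ∧ ps.length = k ∧
    ∀ p ∈ ps, p ≠ [] ∧ p.reverse = p})
    ⟨v.length, v.map ([·]), flatten_map_singleton v, by simp, by simp⟩

lemma PL_append (a b : List α) : PL (a ++ b) ≤ PL a + PL b := by
  obtain ⟨ps, rfl, hlen, hps⟩ := exists_palindromic_factorization a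
  obtain ⟨qs, rfl, hlen', hqs⟩ := exists_palindromic_factorization b
  rw [← hlen, ← hlen', ← length_append]
  exact PL_le _ (by simp) fun p hp => (mem_append.1 hp).elim (hps p) (hqs p)

lemma PL_le_maxPL {t v : List α} (h : t <:+: v) : PL t ≤ maxPL v := by
  refine le_csSup ⟨v.length, ?_⟩ ⟨t, h, rfl⟩
  rintro n ⟨t', ht', rfl⟩
  exact (PL_le_length t').trans ht'.length_le

end PalindromicLength

section PowerFactors

lemma getElem?_flatten_replicate (v : List α) {n i : ℕ} (h : i < n * v.length) :
    (replicate n v).flatten[i]? = v[i % v.length]? := by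
  induction n generalizing i with
  | zero => simp at h
  | succ n ih =>
    rw [replicate_succ, flatten_cons]
    rcases lt_or_ge i v.length with hi | hi
    · rw [getElem?_append_left hi, Nat.mod_eq_of_lt hi]
    · rw [getElem?_append_right hi, ih (by rw [Nat.succ_mul] at h; omega),
        ← Nat.mod_eq_sub_mod hi]

lemma infix_flatten_replicate_iff {t v : List α} {n : ℕ} :
    t <:+: (replicate n v).flatten ↔ ∃ k, t.length + k ≤ n * v.length ∧
      ∀ i (h : i < t.length), v[(i + k) % v.length]? = some t[i] := by
  simp only [infix_iff_getElem?, length_flatten, map_replicate, sum_replicate, smul_eq_mul]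
  refine exists_congr fun k => and_congr_right fun hk => forall₂_congr fun i hi => ?_
  rw [getElem?_flatten_replicate v (by omega)]

lemma getElem_add_length_of_infix_flatten_replicate {t v : List α} {n : ℕ}
    (h : t <:+: (replicate n v).flatten) (i : ℕ) (hi : i + v.length < t.length) :
    t[i + v.length] = t[i] := by
  obtain ⟨k, -, hk⟩ := infix_flatten_replicate_iff.1 h
  have := hk (i + v.length) hi
  rw [Nat.add_right_comm, Nat.add_mod_right, hk i (by omega)] at this
  exact (Option.some.inj this).symm

lemma append_infix_flatten_replicate_succ {t v : List α} {n : ℕ}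
    (h : t <:+: (replicate n v).flatten) (hv : v ≠ []) (hl : v.length ≤ t.length) :
    t ++ [t[t.length - v.length]'(by have := length_pos_iff.2 hv; omega)] <:+:
      (replicate (n + 1) v).flatten := by
  have hv0 := length_pos_iff.2 hv
  obtain ⟨k, hkl, hk⟩ := infix_flatten_replicate_iff.1 h
  refine infix_flatten_replicate_iff.2
    ⟨k, by simp only [length_append, length_singleton, Nat.succ_mul]; omega, fun i hi => ?_⟩
  simp only [length_append, length_singleton] at hi
  rcases Nat.lt_succ_iff_lt_or_eq.1 hi with hi | rfl
  · rw [getElem_append_left hi, hk i hi]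
  · rw [getElem_append_right le_rfl]
    simp only [Nat.sub_self, getElem_singleton]
    rw [← hk _ (by omega), Nat.mod_eq_sub_mod (by omega : t.length + k ≥ v.length)]
    congr 2
    omega

lemma IsPowFactor.of_infix {u t t' : List α} (hp : IsPowFactor u t) (h : t' <:+: t) :
    IsPowFactor u t' :=
  hp.imp (fun ⟨k, hk⟩ => ⟨k, h.trans hk⟩) (fun ⟨k, hk⟩ => ⟨k, h.trans hk⟩)

lemma IsPowFactor.getElem_add_length {u t : List α} (hp : IsPowFactor u t) (i : ℕ)
    (hi : i + u.length < t.length) : t[i + u.length] = t[i] := by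
  rcases hp with ⟨n, h⟩ | ⟨n, h⟩
  · exact getElem_add_length_of_infix_flatten_replicate h i hi
  · have := getElem_add_length_of_infix_flatten_replicate h i (by simpa using hi)
    simpa using this

lemma IsPowFactor.append_getElem {u t : List α} (hp : IsPowFactor u t) (hu : u ≠ [])
    (hl : u.length ≤ t.length) :
    IsPowFactor u (t ++ [t[t.length - u.length]'(by have := length_pos_iff.2 hu; omega)]) := by
  rcases hp with ⟨n, h⟩ | ⟨n, h⟩
  · exact Or.inl ⟨n + 1, append_infix_flatten_replicate_succ h hu hl⟩
  · have := append_infix_flatten_replicate_succ h (by simpa using hu) (by simpa using hl)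
    exact Or.inr ⟨n + 1, by simpa using this⟩

variable {w : ℕ → α} {u : List α} {a b : ℕ}

lemma IsPowFactor.subword_periodic (hp : IsPowFactor u (Subword w a b)) {n : ℕ} (ha : a ≤ n)
    (hb : n + u.length ≤ b) : w (n + u.length) = w n := by
  have := hp.getElem_add_length (n - a) (by simp; omega)
  rwa [getElem_subword, getElem_subword, ← Nat.add_assoc, Nat.add_sub_cancel' ha] at this

lemma IsPowFactor.subword_succ (hp : IsPowFactor u (Subword w a b)) (hu : u ≠ [])
    (hl : u.length ≤ b + 1 - a) (hw : w (b + 1) = w (b + 1 - u.length)) :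
    IsPowFactor u (Subword w a (b + 1)) := by
  have hu0 := length_pos_iff.2 hu
  have := hp.append_getElem hu (by simpa using hl)
  rwa [getElem_subword, length_subword,
    show a + (b + 1 - a - u.length) = b + 1 - u.length by omega, ← hw, ← subword_self,
    ← subword_append w (by omega) (Nat.le_succ b)] at this

end PowerFactors

section Runs

variable {γ : ℕ} {w : ℕ → α} {u : List α}

/-- A run nested in another could be extended to the left; two overlapping runs share the period
`|u|` across the overlap, so the earlier one could be extended to the right. Both contradict
maximality. -/
lemma IsRun.lt_of_lt (hu : u ≠ []) {i j i' j' : ℕ} (hA : IsRun γ w u i j)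
    (hB : IsRun γ w u i' j') (hii : i < i') : j < i' := by
  obtain ⟨-, -, hAi, hA, -, hAright⟩ := hA
  obtain ⟨hBij, -, -, hB, hBleft, -⟩ := hB
  by_contra! hji
  rcases le_or_gt j' j with hjj | hjj
  · exact hBleft (hA.of_infix (subword_infix_subword w (by omega) (by omega)))
  · refine hAright (hA.subword_succ hu (by omega) ?_)
    rw [show j + u.length + 1 - u.length = j + 1 by omega, Nat.add_right_comm]
    exact hB.subword_periodic (by omega) (by omega)

end Runs

section Reduction

lemma fracPow_prefix_fracPow_add (z : List α) {e : ℚ} (he : 0 ≤ e) (n : ℕ) :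
    fracPow z e <+: fracPow z (e + n) := by
  have hfloor : ⌊e + n⌋.toNat = ⌊e⌋.toNat + n := by
    have := Int.floor_nonneg.2 he
    rw [Int.floor_add_natCast]
    omega
  have hfloor' : ⌊(e + n) * z.length⌋.toNat = ⌊e * z.length⌋.toNat + n * z.length := by
    have := Int.floor_nonneg.2 (mul_nonneg he (Nat.cast_nonneg z.length))
    rw [add_mul, show (n : ℚ) * z.length = ((n * z.length : ℕ) : ℚ) by push_cast; ring,
      Int.floor_add_natCast]
    omega
  rw [fracPow, fracPow, hfloor, hfloor', add_mul, Nat.add_sub_add_right, replicate_add,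
    flatten_append, append_assoc]
  refine (prefix_append_right_inj _).2 ?_
  cases n with
  | zero => simp
  | succ n =>
    rw [replicate_succ, flatten_cons, append_assoc]
    exact (take_prefix _ _).trans (prefix_append _ _)

lemma InPhi.fracPow_prefix {γ h : ℕ} {φ : ℚ → ℚ} (hφ : InPhi γ h φ) (hγ : 2 ≤ γ) (z : List α)
    {q : ℚ} (hq : 1 ≤ q) : fracPow z (φ q) <+: fracPow z q := by
  obtain ⟨hlo, -, n, hn⟩ := hφ q hq
  have hγ' : (2 : ℚ) ≤ γ := by exact_mod_cast hγ
  have := fracPow_prefix_fracPow_add z (e := φ q) (by linarith) n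
  rwa [show φ q + n = q by linarith] at this

variable {W Z : ℕ → List α} {E : ℕ → ℚ}

lemma kappa_succ (k : ℕ) :
    kappa W Z E (k + 1) =
      kappa W Z E k + (W (k + 1) ++ fracPow (Z (k + 1)) (E (k + 1))).length := by
  rw [kappa, Finset.sum_Icc_succ_top (by omega), length_append]
  rfl

lemma monotone_kappa : Monotone (kappa W Z E) :=
  monotone_nat_of_le_succ fun k => by rw [kappa_succ]; omega

lemma length_redPrefix (k : ℕ) : (redPrefix W Z E k).length = kappa W Z E k := by
  induction k with
  | zero => simp [redPrefix, kappa]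
  | succ k ih => simp [redPrefix, kappa_succ, ih]

lemma IsReduce.getElem?_block {x : ℕ → α} (hred : IsReduce W Z E x) (k : ℕ) {f : ℕ}
    (hf : f < (W (k + 1) ++ fracPow (Z (k + 1)) (E (k + 1))).length) :
    (W (k + 1) ++ fracPow (Z (k + 1)) (E (k + 1)))[f]? = some (x (kappa W Z E k + f + 1)) := by
  have h := congrArg (·[kappa W Z E k + f]?) (hred (k + 1))
  simp only [redPrefix, append_assoc] at h
  rw [getElem?_append_right (by rw [length_redPrefix]; omega), length_redPrefix,
    Nat.add_sub_cancel_left] at h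
  rw [h, length_append, length_redPrefix, getElem?_map, getElem?_range (by omega),
    Option.map_some, Nat.add_comm 1]

end Reduction

namespace IsFactrz

variable {γ : ℕ} {w : ℕ → α} {u : List α} {I J : ℕ → ℕ} {W Z : ℕ → List α} {D : ℕ → ℚ}
  (hf : IsFactrz γ w u I J W Z D)
include hf

lemma I_le_J {k : ℕ} (hk : 1 ≤ k) : I k ≤ J k :=
  (hf.run k hk).1.le

lemma I_le_I {a b : ℕ} (ha : 1 ≤ a) (hab : a ≤ b) : I a ≤ I b := by
  induction b, hab using Nat.le_induction with
  | base => exact le_rfl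
  | succ b hb ih => exact ih.trans (hf.mono b (by omega)).le

lemma J_lt_I_succ (hu : u ≠ []) (k : ℕ) : J k < I (k + 1) := by
  cases k with
  | zero =>
    have := (hf.run 1 le_rfl).2.2.1
    rw [hf.j0]
    exact Nat.zero_lt_of_lt this
  | succ k =>
    exact (hf.run (k + 1) (by omega)).lt_of_lt hu (hf.run (k + 2) (by omega))
      (hf.mono (k + 1) (by omega))

lemma strictMono_J (hu : u ≠ []) : StrictMono J :=
  strictMono_nat_of_lt_succ fun k => (hf.J_lt_I_succ hu k).trans_le (hf.I_le_J (by omega))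

lemma length_W (hu : u ≠ []) (k : ℕ) : (W (k + 1)).length = I (k + 1) - 1 - J k := by
  have := hf.J_lt_I_succ hu k
  rw [hf.wdef (k + 1) (by omega), length_subword, Nat.add_sub_cancel]
  omega

lemma subword_block (hu : u ≠ []) (k : ℕ) :
    Subword w (J k + 1) (J (k + 1)) = W (k + 1) ++ fracPow (Z (k + 1)) (D (k + 1)) := by
  have := hf.J_lt_I_succ hu k
  have := hf.I_le_J (k := k + 1) (by omega)
  have hW : W (k + 1) = Subword w (J k + 1) (I (k + 1) - 1) := by
    simpa using hf.wdef (k + 1) (by omega)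
  have hsplit := subword_append w (a := J k + 1) (b := I (k + 1) - 1) (c := J (k + 1))
    (by omega) (by omega)
  rwa [Nat.sub_add_cancel (by omega), hf.zd (k + 1) (by omega), ← hW] at hsplit

lemma kappa_eq (hu : u ≠ []) (k : ℕ) : kappa W Z D k = J k := by
  induction k with
  | zero => simp [kappa, hf.j0]
  | succ k ih =>
    have := hf.strictMono_J hu (Nat.lt_add_one k)
    rw [kappa_succ, ih, ← hf.subword_block hu, length_subword]
    omega

lemma sub_le_of_runCountLe (hu : u ≠ []) {m1 m2 g j1 j2 : ℕ} (hg : RunCountLe γ w u m1 m2 g)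
    (h1 : m1 ≤ I (j1 + 1)) (h2 : J j2 ≤ m2) : j2 - j1 ≤ g := by
  have hJ := hf.strictMono_J hu
  have := hg ((Finset.Icc (j1 + 1) j2).image fun k => (I k, J k)) (by
    simp only [Finset.mem_image, Finset.mem_Icc]
    rintro _ ⟨k, ⟨hk1, hk2⟩, rfl⟩
    exact ⟨hf.run k (by omega), h1.trans (hf.I_le_I (by omega) hk1),
      (hJ.monotone hk2).trans h2⟩)
  rwa [Finset.card_image_of_injective _ fun a b h => hJ.injective (congrArg Prod.snd h),
    Nat.card_Icc, Nat.add_sub_add_right] at this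

end IsFactrz

lemma RpoDom.lt_I {γ : ℕ} {w : ℕ → α} {u : List α} {I J : ℕ → ℕ} {W Z : ℕ → List α}
    {D : ℕ → ℚ} {m k : ℕ} (hd : RpoDom γ w u m) (hf : IsFactrz γ w u I J W Z D) (hk : 1 ≤ k)
    (hm : m ≤ J k) : m < I k := by
  by_contra! hIm
  exact hd.2 _ _ (hf.run k hk) ⟨hIm, hm⟩

section ReducedFactor

variable {γ : ℕ} {w : ℕ → α} {u : List α} {I J : ℕ → ℕ} {W Z : ℕ → List α} {D E : ℕ → ℚ}
  {x : ℕ → α} (hu : u ≠ []) (hf : IsFactrz γ w u I J W Z D) (hred : IsReduce W Z E x)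
  (hpre : ∀ k, 1 ≤ k → W k ++ fracPow (Z k) (E k) <+: W k ++ fracPow (Z k) (D k))
include hu hf hpre

lemma length_reduced_block_le (k : ℕ) :
    (W (k + 1) ++ fracPow (Z (k + 1)) (E (k + 1))).length ≤ J (k + 1) - J k := by
  have := (hpre (k + 1) (by omega)).length_le
  rwa [← hf.subword_block hu, length_subword, Nat.add_sub_add_right] at this

include hred

lemma subword_reduced_eq (k : ℕ) {a b : ℕ} (ha : 1 ≤ a)
    (hb : b ≤ (W (k + 1) ++ fracPow (Z (k + 1)) (E (k + 1))).length) :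
    Subword x (kappa W Z E k + a) (kappa W Z E k + b) = Subword w (J k + a) (J k + b) := by
  refine subword_add_congr fun n hn hnb => ?_
  have hlt : n - 1 < (W (k + 1) ++ fracPow (Z (k + 1)) (E (k + 1))).length := by omega
  have hx := hred.getElem?_block k hlt
  have hw := prefix_iff_getElem?.1 (hpre (k + 1) (by omega)) (n - 1) hlt
  rw [← getElem?_eq_getElem hlt, hx, ← hf.subword_block hu,
    getElem?_subword w (by have := length_reduced_block_le hu hf hpre k; omega)] at hw
  rw [show kappa W Z E k + n = kappa W Z E k + (n - 1) + 1 by omega,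
    show J k + n = J k + 1 + (n - 1) by omega]
  exact (Option.some.inj hw).symm

theorem PL_reduced_subword_le {j m1 m2 : ℕ} (hm1 : J j < m1) (hm1' : m1 < I (j + 1)) (k : ℕ)
    (hk : j ≤ k) (f : ℕ) (hfk : f ≤ (W (k + 1) ++ fracPow (Z (k + 1)) (E (k + 1))).length)
    (hfm : J k + f ≤ m2) :
    PL (Subword x (kappa W Z E j + (m1 - J j)) (kappa W Z E k + f)) ≤
      (k - j + 1) * maxPL (Subword w m1 m2) := by
  have hJ := hf.strictMono_J hu
  induction k, hk using Nat.le_induction generalizing f with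
  | base =>
    rw [subword_reduced_eq hu hf hred hpre j (by omega) hfk, Nat.add_sub_cancel' hm1.le,
      Nat.sub_self, zero_add, one_mul]
    exact PL_le_maxPL (subword_infix_subword w le_rfl hfm)
  | succ k hk ih =>
    have hblock := length_reduced_block_le hu hf hpre k
    have hJk := hJ.monotone (k.le_add_right 1)
    have hprev := ih _ le_rfl (by omega)
    rw [← kappa_succ] at hprev
    have hstart : kappa W Z E j + (m1 - J j) ≤ kappa W Z E (k + 1) := by
      have := hf.length_W hu j
      have := monotone_kappa (W := W) (Z := Z) (E := E) (Nat.add_le_add_right hk 1)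
      rw [kappa_succ, length_append] at this
      omega
    have hlast := subword_reduced_eq hu hf hred hpre (k + 1) (a := 1) le_rfl hfk
    have hm1J : m1 ≤ J (k + 1) + 1 := by
      have := hf.I_le_J (k := j + 1) (by omega)
      have := hJ.monotone (Nat.add_le_add_right hk 1)
      omega
    rw [subword_append x (b := kappa W Z E (k + 1)) (by omega) (by omega), hlast,
      show k + 1 - j = k - j + 1 by omega, add_one_mul]
    exact (PL_append _ _).trans
      (add_le_add hprev (PL_le_maxPL (subword_infix_subword w hm1J hfm)))

end ReducedFactor

theorem reduced_factor_PL_bound_general {α : Type*} (γ h : ℕ) (hγ : 3 ≤ γ)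
    (w : ℕ → α) (u : List α) (hu : InPi γ w u)
    (φ : ℚ → ℚ) (hφ : InPhi γ h φ)
    (I J : ℕ → ℕ) (W Z : ℕ → List α) (D : ℕ → ℚ)
    (hf : IsFactrz γ w u I J W Z D)
    (xb : ℕ → α) (hred : IsReduce W Z (fun k => φ (D k)) xb)
    (m1 m2 : ℕ) (hle : m1 ≤ m2)
    (hd1 : RpoDom γ w u m1) (hd2 : RpoDom γ w u m2)
    (g : ℕ) (hg : RunCountLe γ w u m1 m2 g)
    (mb1 mb2 : ℕ)
    (hr1 : RpoRel W Z D (fun k => φ (D k)) m1 mb1)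
    (hr2 : RpoRel W Z D (fun k => φ (D k)) m2 mb2) :
    PL (Subword xb mb1 mb2) ≤ (g + 1) * maxPL (Subword w m1 m2) := by
  have hu0 : u ≠ [] := hu.1.1
  have hpre : ∀ k, 1 ≤ k → W k ++ fracPow (Z k) (φ (D k)) <+: W k ++ fracPow (Z k) (D k) :=
    fun k hk => (prefix_append_right_inj _).2 (hφ.fracPow_prefix (by omega) (Z k) (hf.dge k hk))
  obtain ⟨j1, hj1, hj1', rfl⟩ := hr1
  obtain ⟨j2, hj2, hj2', rfl⟩ := hr2
  simp only [hf.kappa_eq hu0] at hj1 hj1' hj2 hj2' ⊢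
  have hm1 := hd1.lt_I hf (by omega) hj1'
  have hm2 := hd2.lt_I hf (by omega) hj2'
  have hj : j1 ≤ j2 := by
    by_contra! hlt
    have := (hf.strictMono_J hu0).monotone (show j2 + 1 ≤ j1 by omega)
    omega
  have hcount := hf.sub_le_of_runCountLe hu0 hg hm1.le hj2.le
  have hlast : m2 - J j2 ≤ (W (j2 + 1) ++ fracPow (Z (j2 + 1)) (φ (D (j2 + 1)))).length := by
    rw [length_append, hf.length_W hu0]
    omega
  calc _ ≤ (j2 - j1 + 1) * maxPL (Subword w m1 m2) :=
        PL_reduced_subword_le hu0 hf hred hpre hj1 hm1 j2 hj _ hlast (by omega)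
    _ ≤ (g + 1) * maxPL (Subword w m1 m2) := Nat.mul_le_mul_right _ (by omega)

/-- palindromic length bound for images of factors with at most `g` runs. -/
theorem reduced_factor_PL_bound {α : Type*} (γ h : ℕ) (hγ : 3 ≤ γ) (hh : γ ≤ h)
    (w : ℕ → α) (u : List α) (hw : ¬ UltimatelyPeriodic w) (hu : InPi γ w u)
    (φ : ℚ → ℚ) (hφ : InPhi γ h φ)
    (I J : ℕ → ℕ) (W Z : ℕ → List α) (D : ℕ → ℚ)
    (hf : IsFactrz γ w u I J W Z D)
    (xb : ℕ → α) (hred : IsReduce W Z (fun k => φ (D k)) xb)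
    (m1 m2 : ℕ) (hle : m1 ≤ m2)
    (hd1 : RpoDom γ w u m1) (hd2 : RpoDom γ w u m2)
    (g : ℕ) (hg : RunCountLe γ w u m1 m2 g)
    (mb1 mb2 : ℕ)
    (hr1 : RpoRel W Z D (fun k => φ (D k)) m1 mb1)
    (hr2 : RpoRel W Z D (fun k => φ (D k)) m2 mb2) :
    PL (Subword xb mb1 mb2) ≤ (g + 1) * maxPL (Subword w m1 m2) :=
  reduced_factor_PL_bound_general γ h hγ w u hu φ hφ I J W Z D hf xb hred m1 m2 hle hd1 hd2 g hg mb1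
    mb2 hr1 hr2
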